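/- Let v ∈ P and let ω ∈ Γ satisfy ω_{i,m} > 0 for all m and all i ∈ S_m. Then g_v(ω) = min_{(i₁,i₂)∈C(v)} [ (μ_{i₁}(v) − μ_{i₂}(v))²/2 ] / [ (1/M_{i₁}²) Σ_{m : i₁∈S_m} 1/ω_{i₁,m} + (1/M_{i₂}²) Σ_{m : i₂∈S_m} 1/ω_{i₂,m} ]. (Equation (26) in the proof of Lemma 2.) -/

import Mathlib

open Finset
open scoped Classical

namespace HetTS

noncomputable section

variable {K M : ℕ}

/-- Number of clients having access to arm `i`. -/
def Mi (S : Fin M → Finset (Fin K)) (i : Fin K) : ℕ :=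
  (Finset.univ.filter fun m => i ∈ S m).card

/-- The mean reward `μ_i(v)` of arm `i`: average of the means of arm `i` across the clients
having access to it. -/
def armMean (S : Fin M → Finset (Fin K)) (v : Fin M → Fin K → ℝ) (i : Fin K) : ℝ :=
  (1 / (Mi S i : ℝ)) * ∑ m ∈ Finset.univ.filter (fun m => i ∈ S m), v m i

/-- Arm `i` is the (unique) best arm of client `m` under instance `v`. -/
def isBest (S : Fin M → Finset (Fin K)) (v : Fin M → Fin K → ℝ) (m : Fin M) (i : Fin K) :
    Prop :=
  i ∈ S m ∧ ∀ j ∈ S m, j ≠ i → armMean S v j < armMean S v i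

/-- The set `P` of problem instances having a unique best arm at each client. -/
def PSet (S : Fin M → Finset (Fin K)) : Set (Fin M → Fin K → ℝ) :=
  {v | ∀ m, ∃ i, isBest S v m i}

/-- The set of alternative instances `Alt(v)`: instances in `P` whose tuple of best arms
differs from that of `v`. -/
def AltSet (S : Fin M → Finset (Fin K)) (v : Fin M → Fin K → ℝ) :
    Set (Fin M → Fin K → ℝ) :=
  {v' | v' ∈ PSet S ∧ ¬ ∀ (m : Fin M) (i : Fin K), isBest S v m i ↔ isBest S v' m i}

/-- The set `Γ` of allocations: families `(ω_{i,m})_{m, i ∈ S_m}` of nonnegative weights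
summing to one for each client (represented as functions vanishing off the support). -/
def Gam (S : Fin M → Finset (Fin K)) : Set (Fin M → Fin K → ℝ) :=
  {ω | (∀ m, ∀ i ∈ S m, 0 ≤ ω m i) ∧ (∀ m, ∑ i ∈ S m, ω m i = 1) ∧
    ∀ m, ∀ i, i ∉ S m → ω m i = 0}

/-- `g_v(ω)`, the inner infimum over alternative instances. -/
def gfun (S : Fin M → Finset (Fin K)) (v ω : Fin M → Fin K → ℝ) : ℝ :=
  sInf {x | ∃ v' ∈ AltSet S v,
    x = ∑ m : Fin M, ∑ i ∈ S m, ω m i * (v m i - v' m i) ^ 2 / 2}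

/-- The gap `Δ_i(v)`. -/
def Delta (S : Fin M → Finset (Fin K)) (v : Fin M → Fin K → ℝ) (i : Fin K) : ℝ :=
  sInf {x | ∃ m : Fin M, i ∈ S m ∧
    x = |armMean S v i - sSup {y | ∃ j ∈ S m, j ≠ i ∧ y = armMean S v j}|}

/-- The denominator `(1/M_i²) ∑_{m : i ∈ S_m} 1/ω_{i,m}`. -/
def armDenom (S : Fin M → Finset (Fin K)) (ω : Fin M → Fin K → ℝ) (i : Fin K) : ℝ :=
  (1 / (Mi S i : ℝ) ^ 2) * ∑ m ∈ Finset.univ.filter (fun m => i ∈ S m), 1 / ω m i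

/-- The simplified objective `g̃_v(ω)`. -/
def gtilde (S : Fin M → Finset (Fin K)) (v ω : Fin M → Fin K → ℝ) : ℝ :=
  if ∃ m, ∃ i ∈ S m, ω m i = 0 then 0
  else sInf {x | ∃ i : Fin K, x = (Delta S v i) ^ 2 / 2 / armDenom S ω i}

/-- The relation `R` on arms: two arms are related if some client has access to both. -/
def armRel (S : Fin M → Finset (Fin K)) (i₁ i₂ : Fin K) : Prop :=
  ∃ m, i₁ ∈ S m ∧ i₂ ∈ S m

/-- The equivalence class `Q` of arm `i` under the smallest equivalence relation
containing `R`. -/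
def armClass (S : Fin M → Finset (Fin K)) (i : Fin K) : Set (Fin K) :=
  {i' | Relation.EqvGen (armRel S) i i'}

/-- Same equivalence class, as a `Finset`. -/
def classFinset (S : Fin M → Finset (Fin K)) (i : Fin K) : Finset (Fin K) :=
  Finset.univ.filter fun i' => Relation.EqvGen (armRel S) i i'

/-- The per-class objective `g̃_v^{(j)}(ω)` where `Q` is the `j`-th equivalence class. -/
def gtildeC (S : Fin M → Finset (Fin K)) (v : Fin M → Fin K → ℝ) (Q : Set (Fin K))
    (ω : Fin M → Fin K → ℝ) : ℝ :=
  if ∃ m, ∃ i ∈ S m, i ∈ Q ∧ ω m i = 0 then 0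
  else sInf {x | ∃ i ∈ Q, x = (Delta S v i) ^ 2 / armDenom S ω i}

/-- `ω` is a common solution: it simultaneously attains `max_{ω'∈Γ} g̃_v(ω')` and
`max_{ω'∈Γ} g̃_v^{(j)}(ω')` for every equivalence class `Q_j`. -/
def IsCommonSol (S : Fin M → Finset (Fin K)) (v ω : Fin M → Fin K → ℝ) : Prop :=
  ω ∈ Gam S ∧ (∀ ω' ∈ Gam S, gtilde S v ω' ≤ gtilde S v ω) ∧
    ∀ i : Fin K, ∀ ω' ∈ Gam S,
      gtildeC S v (armClass S i) ω' ≤ gtildeC S v (armClass S i) ω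

/-- The balanced condition. -/
def BalancedCond (S : Fin M → Finset (Fin K)) (ω : Fin M → Fin K → ℝ) : Prop :=
  ∀ m₁ m₂ : Fin M, ∀ i₁ i₂ : Fin K, i₁ ∈ S m₁ → i₂ ∈ S m₁ → i₁ ∈ S m₂ → i₂ ∈ S m₂ →
    ω m₁ i₁ / ω m₁ i₂ = ω m₂ i₁ / ω m₂ i₂

/-- The pseudo-balanced condition for instance `v`. -/
def PseudoBalancedCond (S : Fin M → Finset (Fin K)) (v ω : Fin M → Fin K → ℝ) : Prop :=
  ∀ i₁ i₂ : Fin K, Relation.EqvGen (armRel S) i₁ i₂ →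
    (Delta S v i₁) ^ 2 / armDenom S ω i₁ = (Delta S v i₂) ^ 2 / armDenom S ω i₂

/-- The matrix `H(v)` (restricted to a class it gives `H^{(j)}(v)`). -/
def Hmat (S : Fin M → Finset (Fin K)) (v : Fin M → Fin K → ℝ) (i₁ i₂ : Fin K) : ℝ :=
  (1 / ((Delta S v i₁) ^ 2 * (Mi S i₁ : ℝ) ^ 2)) *
    ((Finset.univ.filter fun m => i₁ ∈ S m ∧ i₂ ∈ S m).card : ℝ)

section Helpers

variable (S : Fin M → Finset (Fin K)) (v ω : Fin M → Fin K → ℝ)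

lemma Mi_card (j : Fin K) : (Finset.univ.filter fun m => j ∈ S m).card = Mi S j := rfl

lemma Mi_pos (hcov : ∀ i : Fin K, ∃ m, i ∈ S m) (i : Fin K) : 0 < Mi S i := by
  obtain ⟨m, hm⟩ := hcov i
  exact Finset.card_pos.2 ⟨m, by simp [hm]⟩

lemma W_pos (hcov : ∀ i : Fin K, ∃ m, i ∈ S m)
    (hpos : ∀ m : Fin M, ∀ i ∈ S m, 0 < ω m i) (i : Fin K) :
    0 < ∑ m ∈ Finset.univ.filter (fun m => i ∈ S m), 1 / ω m i := by
  obtain ⟨m, hm⟩ := hcov i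
  refine Finset.sum_pos (fun m' hm' => ?_) ⟨m, by simp [hm]⟩
  simp only [Finset.mem_filter] at hm'
  exact div_pos one_pos (hpos m' i hm'.2)

lemma denom_pos (hcov : ∀ i : Fin K, ∃ m, i ∈ S m)
    (hpos : ∀ m : Fin M, ∀ i ∈ S m, 0 < ω m i) (i : Fin K) :
    0 < armDenom S ω i := by
  have h1 := Mi_pos S hcov i
  have h2 := W_pos S ω hcov hpos i
  have : (0:ℝ) < (Mi S i : ℝ) := by exact_mod_cast h1
  exact mul_pos (by positivity) h2

/-- Cauchy-Schwarz per arm. -/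
lemma cs_arm (hcov : ∀ i : Fin K, ∃ m, i ∈ S m)
    (hpos : ∀ m : Fin M, ∀ i ∈ S m, 0 < ω m i) (v' : Fin M → Fin K → ℝ) (i : Fin K) :
    (armMean S v i - armMean S v' i) ^ 2 / armDenom S ω i ≤
      ∑ m ∈ Finset.univ.filter (fun m => i ∈ S m), ω m i * (v m i - v' m i) ^ 2 := by
  classical
  set T := Finset.univ.filter (fun m => i ∈ S m) with hT
  have hMpos : (0:ℝ) < (Mi S i : ℝ) := by exact_mod_cast Mi_pos S hcov i
  have hWpos := W_pos S ω hcov hpos i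
  have hωpos : ∀ m ∈ T, 0 < ω m i := fun m hm => hpos m i (by simpa [hT] using hm)
  have key : (∑ m ∈ T, (v m i - v' m i)) ^ 2 / (∑ m ∈ T, 1 / ω m i) ≤
      ∑ m ∈ T, (v m i - v' m i) ^ 2 / (1 / ω m i) :=
    Finset.sq_sum_div_le_sum_sq_div T _ (fun m hm => div_pos one_pos (hωpos m hm))
  have hsum : ∀ m ∈ T, (v m i - v' m i) ^ 2 / (1 / ω m i) = ω m i * (v m i - v' m i) ^ 2 := by
    intro m hm
    rw [div_div_eq_mul_div, div_one, mul_comm]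
  rw [Finset.sum_congr rfl hsum] at key
  have hmean : armMean S v i - armMean S v' i = (1 / (Mi S i : ℝ)) * ∑ m ∈ T, (v m i - v' m i) := by
    simp only [armMean, hT, Finset.sum_sub_distrib]
    ring
  rw [hmean, armDenom, div_le_iff₀ (by positivity)]
  rw [div_le_iff₀ hWpos] at key
  have e1 : (1 / (Mi S i:ℝ) * ∑ m ∈ T, (v m i - v' m i)) ^ 2
      = (∑ m ∈ T, (v m i - v' m i)) ^ 2 / (Mi S i:ℝ) ^ 2 := by
    field_simp
  rw [e1]
  calc (∑ m ∈ T, (v m i - v' m i)) ^ 2 / (Mi S i:ℝ) ^ 2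
      ≤ ((∑ m ∈ T, ω m i * (v m i - v' m i) ^ 2) * ∑ m ∈ T, 1 / ω m i) / (Mi S i:ℝ) ^ 2 := by
        gcongr
    _ = _ := by ring

/-- Uniqueness of best arms. -/
lemma best_unique {m : Fin M} {i j : Fin K} (hi : isBest S v m i) (hj : isBest S v m j) :
    i = j := by
  by_contra h
  exact absurd (hi.2 j hj.1 (Ne.symm h)) (not_lt.2 (hj.2 i hi.1 h).le)

/-- From an alternative instance, extract a flipped pair. -/
lemma alt_flip {v' : Fin M → Fin K → ℝ} (hv : v ∈ PSet S) (hv' : v' ∈ AltSet S v) :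
    ∃ m i₁ i₂, isBest S v m i₁ ∧ i₂ ∈ S m ∧ i₂ ≠ i₁ ∧
      armMean S v' i₁ < armMean S v' i₂ := by
  obtain ⟨hP, hne⟩ := hv'
  push_neg at hne
  obtain ⟨m, i, hiff⟩ := hne
  obtain ⟨b, hb⟩ := hv m
  obtain ⟨b', hb'⟩ := hP m
  have hbb : b ≠ b' := by
    rcases hiff with ⟨h1, h2⟩ | ⟨h1, h2⟩
    · have hib : i = b := best_unique S v h1 hb
      subst hib
      intro h
      subst h
      exact h2 hb'
    · have hib : i = b' := best_unique S v' h2 hb'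
      subst hib
      intro h
      subst h
      exact h1 hb
  exact ⟨m, b, b', hb, hb'.1, fun h => hbb h.symm, hb'.2 b hb.1 hbb⟩

/-- Drop all but two arms from the double sum. -/
lemma double_sum_ge (F : Fin M → Fin K → ℝ) (hF : ∀ m, ∀ i ∈ S m, 0 ≤ F m i)
    {i₁ i₂ : Fin K} (h12 : i₁ ≠ i₂) :
    (∑ m ∈ Finset.univ.filter (fun m => i₁ ∈ S m), F m i₁) +
      (∑ m ∈ Finset.univ.filter (fun m => i₂ ∈ S m), F m i₂) ≤
      ∑ m : Fin M, ∑ i ∈ S m, F m i := by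
  classical
  have key : ∀ m : Fin M,
      (if i₁ ∈ S m then F m i₁ else 0) + (if i₂ ∈ S m then F m i₂ else 0) ≤
        ∑ i ∈ S m, F m i := by
    intro m
    by_cases h1 : i₁ ∈ S m <;> by_cases h2 : i₂ ∈ S m <;> simp [h1, h2]
    · have hsub : {i₁, i₂} ⊆ S m := by
        intro x hx
        simp only [Finset.mem_insert, Finset.mem_singleton] at hx
        rcases hx with rfl | rfl <;> assumption
      calc F m i₁ + F m i₂ = ∑ i ∈ ({i₁, i₂} : Finset (Fin K)), F m i := by
            rw [Finset.sum_pair h12]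
        _ ≤ _ := Finset.sum_le_sum_of_subset_of_nonneg hsub (fun i hi _ => hF m i hi)
    · calc F m i₁ = ∑ i ∈ ({i₁} : Finset (Fin K)), F m i := by simp
        _ ≤ _ := Finset.sum_le_sum_of_subset_of_nonneg (by simpa using h1)
            (fun i hi _ => hF m i hi)
    · calc F m i₂ = ∑ i ∈ ({i₂} : Finset (Fin K)), F m i := by simp
        _ ≤ _ := Finset.sum_le_sum_of_subset_of_nonneg (by simpa using h2)
            (fun i hi _ => hF m i hi)
    · exact Finset.sum_nonneg (fun i hi => hF m i hi)
  calc (∑ m ∈ Finset.univ.filter (fun m => i₁ ∈ S m), F m i₁) +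
        (∑ m ∈ Finset.univ.filter (fun m => i₂ ∈ S m), F m i₂)
      = ∑ m : Fin M, ((if i₁ ∈ S m then F m i₁ else 0) + (if i₂ ∈ S m then F m i₂ else 0)) := by
        rw [Finset.sum_add_distrib, Finset.sum_filter, Finset.sum_filter]
    _ ≤ _ := Finset.sum_le_sum (fun m _ => key m)

/-- Two-variable Titu. -/
lemma titu2 {a b D₁ D₂ : ℝ} (h₁ : 0 < D₁) (h₂ : 0 < D₂) :
    (a - b) ^ 2 / (D₁ + D₂) ≤ a ^ 2 / D₁ + b ^ 2 / D₂ := by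
  rw [div_add_div _ _ (ne_of_gt h₁) (ne_of_gt h₂), div_le_div_iff₀ (by positivity) (by positivity)]
  nlinarith [sq_nonneg (a * D₂ + b * D₁)]

/-- Lower bound: every alternative cost dominates some RHS element. -/
lemma lower_bound (hcov : ∀ i : Fin K, ∃ m, i ∈ S m) (hv : v ∈ PSet S)
    (hpos : ∀ m : Fin M, ∀ i ∈ S m, 0 < ω m i)
    {v' : Fin M → Fin K → ℝ} (hv' : v' ∈ AltSet S v) :
    ∃ m : Fin M, ∃ i₁ i₂ : Fin K, isBest S v m i₁ ∧ i₂ ∈ S m ∧ i₂ ≠ i₁ ∧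
      (armMean S v i₁ - armMean S v i₂) ^ 2 / 2 / (armDenom S ω i₁ + armDenom S ω i₂) ≤
        ∑ m : Fin M, ∑ i ∈ S m, ω m i * (v m i - v' m i) ^ 2 / 2 := by
  obtain ⟨m, i₁, i₂, hb, hi₂, hne, hflip⟩ := alt_flip S v hv hv'
  refine ⟨m, i₁, i₂, hb, hi₂, hne, ?_⟩
  set D₁ := armDenom S ω i₁ with hD₁def
  set D₂ := armDenom S ω i₂ with hD₂def
  have hD₁ : 0 < D₁ := denom_pos S ω hcov hpos i₁
  have hD₂ : 0 < D₂ := denom_pos S ω hcov hpos i₂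
  set δ₁ := armMean S v i₁ - armMean S v' i₁ with hδ₁def
  set δ₂ := armMean S v i₂ - armMean S v' i₂ with hδ₂def
  set Δ := armMean S v i₁ - armMean S v i₂ with hΔdef
  have hΔpos : 0 < Δ := sub_pos.2 (hb.2 i₂ hi₂ hne)
  have hgap : Δ ≤ δ₁ - δ₂ := by
    have := hflip
    simp only [hδ₁def, hδ₂def, hΔdef]
    linarith
  have cs1 := cs_arm S v ω hcov hpos v' i₁
  have cs2 := cs_arm S v ω hcov hpos v' i₂
  have hdrop := double_sum_ge S (fun m i => ω m i * (v m i - v' m i) ^ 2)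
    (fun m i hi => mul_nonneg (hpos m i hi).le (sq_nonneg _)) (fun h => hne h.symm)
  have step1 : δ₁ ^ 2 / D₁ + δ₂ ^ 2 / D₂ ≤
      ∑ m : Fin M, ∑ i ∈ S m, ω m i * (v m i - v' m i) ^ 2 := by
    calc δ₁ ^ 2 / D₁ + δ₂ ^ 2 / D₂ ≤ _ + _ := add_le_add cs1 cs2
      _ ≤ _ := hdrop
  have step2 : Δ ^ 2 / (D₁ + D₂) ≤ δ₁ ^ 2 / D₁ + δ₂ ^ 2 / D₂ := by
    calc Δ ^ 2 / (D₁ + D₂) ≤ (δ₁ - δ₂) ^ 2 / (D₁ + D₂) := by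
          apply div_le_div_of_nonneg_right ?_ (by positivity)
          exact pow_le_pow_left₀ hΔpos.le hgap 2
      _ ≤ _ := titu2 hD₁ hD₂
  have hsum2 : ∑ m : Fin M, ∑ i ∈ S m, ω m i * (v m i - v' m i) ^ 2 / 2 =
      (∑ m : Fin M, ∑ i ∈ S m, ω m i * (v m i - v' m i) ^ 2) / 2 := by
    rw [Finset.sum_div]
    congr 1
    ext m
    rw [Finset.sum_div]
  rw [hsum2, div_div, mul_comm, ← div_div]
  linarith

lemma flip_arith {a b d1 d2 t x1 x2 k e D : ℝ} (h1 : d1 + d2 = D + e)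
    (h2 : b = a - D) (h3 : t * (2 * k) < e) (h4 : 0 < t) (h5 : x1 ≤ k) (h6 : 0 ≤ x2)
    (h7 : 0 ≤ x1) : a + -d1 + t * x1 < b + d2 + t * x2 := by
  nlinarith [mul_le_mul_of_nonneg_left h5 h4.le, mul_nonneg h4.le h6, mul_nonneg h4.le h7]

set_option maxHeartbeats 2000000 in
/-- Upper bound construction: for every admissible pair and every `ε>0` there is an
alternative instance whose cost is within `ε` of the candidate value. -/
lemma construct (hK : 2 ≤ K) (hcov : ∀ i : Fin K, ∃ m, i ∈ S m)
    (hv : v ∈ PSet S) (hω : ω ∈ Gam S)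
    (hpos : ∀ m : Fin M, ∀ i ∈ S m, 0 < ω m i) {m₀ : Fin M} {i₁ i₂ : Fin K}
    (hb : isBest S v m₀ i₁) (hi₂ : i₂ ∈ S m₀) (hne : i₂ ≠ i₁) {ε : ℝ} (hε : 0 < ε) :
    ∃ v' ∈ AltSet S v,
      ∑ m : Fin M, ∑ i ∈ S m, ω m i * (v m i - v' m i) ^ 2 / 2 ≤
        (armMean S v i₁ - armMean S v i₂) ^ 2 / 2 /
          (armDenom S ω i₁ + armDenom S ω i₂) + ε := by
  classical
  have hKpos : (0:ℝ) < K := by positivity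
  set Δ := armMean S v i₁ - armMean S v i₂ with hΔdef
  have hΔ : 0 < Δ := sub_pos.2 (hb.2 i₂ hi₂ hne)
  set D₁ := armDenom S ω i₁ with hD₁def
  set D₂ := armDenom S ω i₂ with hD₂def
  have hD₁ : 0 < D₁ := denom_pos S ω hcov hpos i₁
  have hD₂ : 0 < D₂ := denom_pos S ω hcov hpos i₂
  set W₁ := ∑ m ∈ Finset.univ.filter (fun m => i₁ ∈ S m), 1 / ω m i₁ with hW₁def
  set W₂ := ∑ m ∈ Finset.univ.filter (fun m => i₂ ∈ S m), 1 / ω m i₂ with hW₂def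
  have hW₁ : 0 < W₁ := W_pos S ω hcov hpos i₁
  have hW₂ : 0 < W₂ := W_pos S ω hcov hpos i₂
  have hM₁ : (0:ℝ) < (Mi S i₁ : ℝ) := by exact_mod_cast Mi_pos S hcov i₁
  have hM₂ : (0:ℝ) < (Mi S i₂ : ℝ) := by exact_mod_cast Mi_pos S hcov i₂
  have hDW₁ : D₁ = (1 / (Mi S i₁ : ℝ) ^ 2) * W₁ := rfl
  have hDW₂ : D₂ = (1 / (Mi S i₂ : ℝ) ^ 2) * W₂ := rfl
  set η := min 1 (ε * (D₁ + D₂) / (2 * Δ + 1)) with hηdef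
  have hη : 0 < η := lt_min one_pos (by positivity)
  have hη1 : η ≤ 1 := min_le_left _ _
  have hη2 : η * (2 * Δ + 1) ≤ ε * (D₁ + D₂) := by
    have := min_le_right 1 (ε * (D₁ + D₂) / (2 * Δ + 1))
    rw [le_div_iff₀ (by positivity)] at this
    exact this
  set δ₁ := D₁ * (Δ + η) / (D₁ + D₂) with hδ₁def
  set δ₂ := D₂ * (Δ + η) / (D₁ + D₂) with hδ₂def
  have hδ₁pos : 0 < δ₁ := by positivity
  have hδ₂pos : 0 < δ₂ := by positivity
  set c₁ := (Mi S i₁ : ℝ) * δ₁ / W₁ with hc₁def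
  set c₂ := (Mi S i₂ : ℝ) * δ₂ / W₂ with hc₂def
  have hc₁pos : 0 < c₁ := by positivity
  have hc₂pos : 0 < c₂ := by positivity
  -- target arm means before tie-breaking
  set ν : Fin K → ℝ := fun j => armMean S v j + (if j = i₁ then -δ₁ else 0) +
    (if j = i₂ then δ₂ else 0) with hνdef
  -- bad tie-breaking parameters
  set B : Set ℝ := Set.range (fun p : Fin K × Fin K => (ν p.2 - ν p.1) / ((p.1 : ℝ) - (p.2 : ℝ)))
    with hBdef
  set C := (M : ℝ) * K * ((K : ℝ) ^ 2 / 2 + K * (c₁ + c₂)) with hCdef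
  have hC : 0 ≤ C := by positivity
  set θ₀ := min (η / (2 * K)) (min 1 (ε / (2 * (C + 1)))) with hθ₀def
  have hθ₀ : 0 < θ₀ := lt_min (by positivity) (lt_min one_pos (by positivity))
  have hgood : ∃ θ, θ ∈ Set.Ioo 0 θ₀ \ B := by
    have h1 : (Set.Ioo (0:ℝ) θ₀).Infinite := Set.Ioo_infinite hθ₀
    exact (h1.diff (Set.finite_range _)).nonempty
  obtain ⟨θ, hθmem⟩ := hgood
  obtain ⟨⟨hθpos, hθlt⟩, hθB⟩ := hθmem
  have hθK : θ * (2 * K) < η := by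
    have := hθlt.trans_le (min_le_left _ _)
    rw [lt_div_iff₀ (by positivity)] at this
    exact this
  have hθ1 : θ ≤ 1 := le_trans hθlt.le ((min_le_right _ _).trans (min_le_left _ _))
  have hθε : θ * (2 * (C + 1)) ≤ ε := by
    have h := hθlt.le.trans ((min_le_right _ _).trans (min_le_right _ _))
    rw [le_div_iff₀ (by positivity)] at h
    exact h
  set e : Fin K → ℝ := fun j => θ * (j : ℝ) with hedef
  set v' : Fin M → Fin K → ℝ := fun m j => v m j + e j +
    (if j = i₁ ∧ i₁ ∈ S m then -(c₁ / ω m i₁) else 0) +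
    (if j = i₂ ∧ i₂ ∈ S m then c₂ / ω m i₂ else 0) with hv'def
  have hν : ∀ j, ν j = armMean S v j + (if j = i₁ then -δ₁ else 0) +
      (if j = i₂ then δ₂ else 0) := fun _ => rfl
  have hv'eq : ∀ m j, v' m j = v m j + e j +
      (if j = i₁ ∧ i₁ ∈ S m then -(c₁ / ω m i₁) else 0) +
      (if j = i₂ ∧ i₂ ∈ S m then c₂ / ω m i₂ else 0) := fun _ _ => rfl
  have he : ∀ j : Fin K, e j = θ * (j : ℝ) := fun _ => rfl
  clear_value Δ D₁ D₂ W₁ W₂ η δ₁ δ₂ c₁ c₂ C θ₀ ν B e v'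
  -- (A) arm means of v'
  have hc₁W : c₁ * W₁ = (Mi S i₁ : ℝ) * δ₁ := by
    rw [hc₁def, div_mul_cancel₀ _ (ne_of_gt hW₁)]
  have hc₂W : c₂ * W₂ = (Mi S i₂ : ℝ) * δ₂ := by
    rw [hc₂def, div_mul_cancel₀ _ (ne_of_gt hW₂)]
  have hmean : ∀ j, armMean S v' j = ν j + e j := by
    intro j
    have hMj : (0:ℝ) < (Mi S j : ℝ) := by exact_mod_cast Mi_pos S hcov j
    have hsum1 : ∑ m ∈ Finset.univ.filter (fun m => j ∈ S m),
        (if j = i₁ ∧ i₁ ∈ S m then -(c₁ / ω m i₁) else 0)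
        = if j = i₁ then -((Mi S i₁ : ℝ) * δ₁) else 0 := by
      by_cases hj : j = i₁
      · rw [hj, if_pos rfl]
        calc ∑ m ∈ Finset.univ.filter (fun m => i₁ ∈ S m),
              (if i₁ = i₁ ∧ i₁ ∈ S m then -(c₁ / ω m i₁) else 0)
            = ∑ m ∈ Finset.univ.filter (fun m => i₁ ∈ S m), (-c₁) * (1 / ω m i₁) := by
              refine Finset.sum_congr rfl (fun m hm => ?_)
              rw [if_pos ⟨rfl, (Finset.mem_filter.1 hm).2⟩]
              ring
          _ = (-c₁) * W₁ := by rw [← Finset.mul_sum, hW₁def]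
          _ = -((Mi S i₁ : ℝ) * δ₁) := by rw [neg_mul, hc₁W]
      · rw [if_neg hj]
        refine Finset.sum_eq_zero (fun m _ => ?_)
        rw [if_neg (fun h => hj h.1)]
    have hsum2 : ∑ m ∈ Finset.univ.filter (fun m => j ∈ S m),
        (if j = i₂ ∧ i₂ ∈ S m then c₂ / ω m i₂ else 0)
        = if j = i₂ then (Mi S i₂ : ℝ) * δ₂ else 0 := by
      by_cases hj : j = i₂
      · rw [hj, if_pos rfl]
        calc ∑ m ∈ Finset.univ.filter (fun m => i₂ ∈ S m),
              (if i₂ = i₂ ∧ i₂ ∈ S m then c₂ / ω m i₂ else 0)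
            = ∑ m ∈ Finset.univ.filter (fun m => i₂ ∈ S m), c₂ * (1 / ω m i₂) := by
              refine Finset.sum_congr rfl (fun m hm => ?_)
              rw [if_pos ⟨rfl, (Finset.mem_filter.1 hm).2⟩]
              ring
          _ = c₂ * W₂ := by rw [← Finset.mul_sum, hW₂def]
          _ = (Mi S i₂ : ℝ) * δ₂ := hc₂W
      · rw [if_neg hj]
        refine Finset.sum_eq_zero (fun m _ => ?_)
        rw [if_neg (fun h => hj h.1)]
    have expand : ∑ m ∈ Finset.univ.filter (fun m => j ∈ S m), v' m j =
        (∑ m ∈ Finset.univ.filter (fun m => j ∈ S m), v m j) + (Mi S j : ℝ) * e j +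
          ((if j = i₁ then -((Mi S i₁ : ℝ) * δ₁) else 0) +
           (if j = i₂ then (Mi S i₂ : ℝ) * δ₂ else 0)) := by
      have : ∀ m ∈ Finset.univ.filter (fun m => j ∈ S m), v' m j =
          v m j + e j + ((if j = i₁ ∧ i₁ ∈ S m then -(c₁ / ω m i₁) else 0) +
            (if j = i₂ ∧ i₂ ∈ S m then c₂ / ω m i₂ else 0)) := by
        intro m _
        rw [hv'eq]
        ring
      rw [Finset.sum_congr rfl this, Finset.sum_add_distrib, Finset.sum_add_distrib,
        Finset.sum_add_distrib, hsum1, hsum2, Finset.sum_const, nsmul_eq_mul,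
        Mi_card S j]
    have : armMean S v' j = (1 / (Mi S j : ℝ)) *
        ((∑ m ∈ Finset.univ.filter (fun m => j ∈ S m), v m j) + (Mi S j : ℝ) * e j +
          ((if j = i₁ then -((Mi S i₁ : ℝ) * δ₁) else 0) +
           (if j = i₂ then (Mi S i₂ : ℝ) * δ₂ else 0))) := by
      rw [armMean, expand]
    rw [this, hν j, armMean]
    by_cases hj1 : j = i₁
    · have h12 : ¬(i₁ = i₂) := fun h => hne h.symm
      rw [hj1]
      simp only [if_neg h12, eq_self_iff_true, if_true]
      field_simp
      try ring
    · by_cases hj2 : j = i₂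
      · have h21 : ¬(i₂ = i₁) := hne
        rw [hj2]
        simp only [if_neg h21, eq_self_iff_true, if_true]
        field_simp
        try ring
      · simp only [if_neg hj1, if_neg hj2]
        field_simp
        try ring
  -- (B) injectivity of arm means
  have hinj : ∀ j j' : Fin K, j ≠ j' → armMean S v' j ≠ armMean S v' j' := by
    intro j j' hjj heq
    rw [hmean j, hmean j', he j, he j'] at heq
    have hval : ((j : ℕ) : ℝ) ≠ ((j' : ℕ) : ℝ) := by
      intro h
      exact hjj (Fin.val_injective (by exact_mod_cast h))
    have hsub : ((j : ℕ) : ℝ) - ((j' : ℕ) : ℝ) ≠ 0 := sub_ne_zero.2 hval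
    have hkey : θ * (((j : ℕ) : ℝ) - ((j' : ℕ) : ℝ)) = ν j' - ν j := by
      linear_combination heq
    apply hθB
    rw [hBdef]
    refine ⟨(j, j'), ?_⟩
    simp only
    rw [eq_comm, eq_div_iff hsub]
    linear_combination hkey
  -- (C) v' ∈ PSet
  have hP : v' ∈ PSet S := by
    intro m
    obtain ⟨b0, hb0⟩ := hv m
    obtain ⟨b, hbmem, hbmax⟩ := Finset.exists_max_image (S m) (armMean S v') ⟨b0, hb0.1⟩
    exact ⟨b, hbmem, fun j hj hjb =>
      lt_of_le_of_ne (hbmax j hj) (hinj j b hjb)⟩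
  -- (D) flip at m₀
  have hflip : armMean S v' i₁ < armMean S v' i₂ := by
    rw [hmean i₁, hmean i₂, he i₁, he i₂, hν i₁, hν i₂]
    have h12 : ¬(i₁ = i₂) := fun h => hne h.symm
    have h21 : ¬(i₂ = i₁) := hne
    simp only [if_neg h12, if_neg h21, eq_self_iff_true, if_true, add_zero]
    have hδsum : δ₁ + δ₂ = Δ + η := by
      rw [hδ₁def, hδ₂def]
      field_simp
    have hμ : armMean S v i₂ = armMean S v i₁ - Δ := by rw [hΔdef]; ring
    have hv1 : ((i₁ : ℕ) : ℝ) ≤ (K : ℝ) := by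
      have := i₁.isLt
      exact_mod_cast this.le
    have hv2 : (0:ℝ) ≤ ((i₂ : ℕ) : ℝ) := by positivity
    have hv0 : (0:ℝ) ≤ ((i₁ : ℕ) : ℝ) := by positivity
    exact flip_arith hδsum hμ hθK hθpos hv1 hv2 hv0
  have hAlt : v' ∈ AltSet S v := by
    refine ⟨hP, fun h => ?_⟩
    have h1 := (h m₀ i₁).1 hb
    exact absurd hflip (not_lt.2 (h1.2 i₂ hi₂ hne).le)
  -- (E) cost bound
  refine ⟨v', hAlt, ?_⟩
  have hωle1 : ∀ m, ∀ j ∈ S m, ω m j ≤ 1 := by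
    intro m j hj
    calc ω m j ≤ ∑ i ∈ S m, ω m i := Finset.single_le_sum (fun i hi => hω.1 m i hi) hj
      _ = 1 := hω.2.1 m
  have he0 : ∀ j : Fin K, 0 ≤ e j := by
    intro j
    rw [he]
    positivity
  have heK : ∀ j : Fin K, e j ≤ θ * K := by
    intro j
    rw [he]
    have hjK : ((j : ℕ) : ℝ) ≤ (K : ℝ) := by exact_mod_cast (j.isLt).le
    exact mul_le_mul_of_nonneg_left hjK hθpos.le
  have keybound : ∀ m : Fin M, ∀ j ∈ S m,
      ω m j * (v m j - v' m j) ^ 2 / 2 ≤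
        ω m j * (if j = i₁ ∧ i₁ ∈ S m then -(c₁ / ω m i₁) else 0) ^ 2 / 2 +
        ω m j * (if j = i₂ ∧ i₂ ∈ S m then c₂ / ω m i₂ else 0) ^ 2 / 2 +
        (θ ^ 2 * (K : ℝ) ^ 2 / 2 + θ * (K : ℝ) * (c₁ + c₂)) := by
    intro m j hj
    set a := (if j = i₁ ∧ i₁ ∈ S m then -(c₁ / ω m i₁) else 0) with hadef
    set b := (if j = i₂ ∧ i₂ ∈ S m then c₂ / ω m i₂ else 0) with hbdef
    have hvv : v m j - v' m j = -(e j + a + b) := by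
      rw [hv'eq]
      ring
    have hab : a * b = 0 := by
      rcases Classical.em (j = i₁ ∧ i₁ ∈ S m) with h | h
      · have h2 : ¬ (j = i₂ ∧ i₂ ∈ S m) := fun h2 => hne (by rw [← h2.1, h.1])
        rw [hbdef, if_neg h2, mul_zero]
      · rw [hadef, if_neg h, zero_mul]
    have hωa : ω m j * a ≤ 0 := by
      rcases Classical.em (j = i₁ ∧ i₁ ∈ S m) with h | h
      · rw [hadef, if_pos h]
        have hc : 0 ≤ c₁ / ω m i₁ := le_of_lt (div_pos hc₁pos (hpos m i₁ h.2))
        exact mul_nonpos_of_nonneg_of_nonpos (hpos m j hj).le (neg_nonpos.2 hc)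
      · rw [hadef, if_neg h, mul_zero]
    have hωb : ω m j * b ≤ c₂ := by
      rcases Classical.em (j = i₂ ∧ i₂ ∈ S m) with h | h
      · rw [hbdef, if_pos h, h.1]
        rw [mul_comm, div_mul_cancel₀ _ (ne_of_gt (hpos m i₂ h.2))]
      · rw [hbdef, if_neg h, mul_zero]
        exact hc₂pos.le
    have hωe2 : ω m j * e j ^ 2 ≤ θ ^ 2 * (K : ℝ) ^ 2 := by
      calc ω m j * e j ^ 2 ≤ 1 * e j ^ 2 :=
            mul_le_mul_of_nonneg_right (hωle1 m j hj) (sq_nonneg _)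
        _ = e j ^ 2 := one_mul _
        _ ≤ (θ * K) ^ 2 := pow_le_pow_left₀ (he0 j) (heK j) 2
        _ = θ ^ 2 * (K : ℝ) ^ 2 := by ring
    have h1 : (ω m j * a) * e j ≤ 0 := mul_nonpos_of_nonpos_of_nonneg hωa (he0 j)
    have h2 : (ω m j * b) * e j ≤ c₂ * (θ * K) := by
      rcases le_or_gt (ω m j * b) 0 with hb0 | hb0
      · calc (ω m j * b) * e j ≤ 0 := mul_nonpos_of_nonpos_of_nonneg hb0 (he0 j)
          _ ≤ c₂ * (θ * K) := by positivity
      · exact mul_le_mul hωb (heK j) (he0 j) hc₂pos.le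
    rw [hvv]
    have expand : ω m j * (-(e j + a + b)) ^ 2 / 2 = ω m j * a ^ 2 / 2 + ω m j * b ^ 2 / 2
        + ω m j * (a * b) + ω m j * e j ^ 2 / 2 +
        ((ω m j * a) * e j + (ω m j * b) * e j) := by ring
    rw [expand, hab, mul_zero]
    have hc3 : (0:ℝ) ≤ θ * (K:ℝ) * c₁ := by positivity
    linarith only [hωe2, h1, h2, hc3]
  have hTa : ∑ m : Fin M, ∑ j ∈ S m,
      ω m j * (if j = i₁ ∧ i₁ ∈ S m then -(c₁ / ω m i₁) else 0) ^ 2 / 2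
      = δ₁ ^ 2 / (2 * D₁) := by
    have inner : ∀ m : Fin M, ∑ j ∈ S m,
        ω m j * (if j = i₁ ∧ i₁ ∈ S m then -(c₁ / ω m i₁) else 0) ^ 2 / 2
        = if i₁ ∈ S m then c₁ ^ 2 / 2 * (1 / ω m i₁) else 0 := by
      intro m
      by_cases h : i₁ ∈ S m
      · rw [if_pos h, Finset.sum_eq_single_of_mem i₁ h]
        · rw [if_pos ⟨rfl, h⟩]
          have hω0 := (hpos m i₁ h).ne'
          field_simp
        · intro j hjm hji
          rw [if_neg (fun hh => hji hh.1)]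
          simp
      · rw [if_neg h]
        refine Finset.sum_eq_zero (fun j hjm => ?_)
        rw [if_neg (fun hh => h hh.2)]
        simp
    rw [Finset.sum_congr rfl (fun m _ => inner m), ← Finset.sum_filter, ← Finset.mul_sum,
      ← hW₁def, hc₁def, hDW₁]
    field_simp
  have hTb : ∑ m : Fin M, ∑ j ∈ S m,
      ω m j * (if j = i₂ ∧ i₂ ∈ S m then c₂ / ω m i₂ else 0) ^ 2 / 2
      = δ₂ ^ 2 / (2 * D₂) := by
    have inner : ∀ m : Fin M, ∑ j ∈ S m,
        ω m j * (if j = i₂ ∧ i₂ ∈ S m then c₂ / ω m i₂ else 0) ^ 2 / 2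
        = if i₂ ∈ S m then c₂ ^ 2 / 2 * (1 / ω m i₂) else 0 := by
      intro m
      by_cases h : i₂ ∈ S m
      · rw [if_pos h, Finset.sum_eq_single_of_mem i₂ h]
        · rw [if_pos ⟨rfl, h⟩]
          have hω0 := (hpos m i₂ h).ne'
          field_simp
        · intro j hjm hji
          rw [if_neg (fun hh => hji hh.1)]
          simp
      · rw [if_neg h]
        refine Finset.sum_eq_zero (fun j hjm => ?_)
        rw [if_neg (fun hh => h hh.2)]
        simp
    rw [Finset.sum_congr rfl (fun m _ => inner m), ← Finset.sum_filter, ← Finset.mul_sum,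
      ← hW₂def, hc₂def, hDW₂]
    field_simp
  have hconst0 : (0:ℝ) ≤ θ ^ 2 * (K : ℝ) ^ 2 / 2 + θ * (K : ℝ) * (c₁ + c₂) := by positivity
  have hconstsum : ∑ m : Fin M, ∑ _j ∈ S m, (θ ^ 2 * (K : ℝ) ^ 2 / 2 + θ * (K : ℝ) * (c₁ + c₂))
      ≤ (M : ℝ) * K * (θ ^ 2 * (K : ℝ) ^ 2 / 2 + θ * (K : ℝ) * (c₁ + c₂)) := by
    calc ∑ m : Fin M, ∑ _j ∈ S m, (θ ^ 2 * (K : ℝ) ^ 2 / 2 + θ * (K : ℝ) * (c₁ + c₂))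
        ≤ ∑ _m : Fin M, ∑ _j : Fin K, (θ ^ 2 * (K : ℝ) ^ 2 / 2 + θ * (K : ℝ) * (c₁ + c₂)) := by
          refine Finset.sum_le_sum (fun m _ => Finset.sum_le_sum_of_subset_of_nonneg
            (Finset.subset_univ _) (fun _ _ _ => hconst0))
      _ = (M : ℝ) * K * (θ ^ 2 * (K : ℝ) ^ 2 / 2 + θ * (K : ℝ) * (c₁ + c₂)) := by
          simp [Finset.sum_const, Finset.card_univ, mul_assoc]
          ring
  have hTc : δ₁ ^ 2 / (2 * D₁) + δ₂ ^ 2 / (2 * D₂) = (Δ + η) ^ 2 / (2 * (D₁ + D₂)) := by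
    rw [hδ₁def, hδ₂def]
    field_simp
  have h5 : (Δ + η) ^ 2 / (2 * (D₁ + D₂)) ≤ Δ ^ 2 / 2 / (D₁ + D₂) + ε / 2 := by
    have hηsq : η ^ 2 ≤ η := by
      have := mul_le_mul_of_nonneg_left hη1 hη.le
      calc η ^ 2 = η * η := sq η
        _ ≤ η * 1 := this
        _ = η := mul_one η
    have hsq : (Δ + η) ^ 2 ≤ Δ ^ 2 + ε * (D₁ + D₂) := by linarith only [hη2, hηsq]
    calc (Δ + η) ^ 2 / (2 * (D₁ + D₂)) ≤ (Δ ^ 2 + ε * (D₁ + D₂)) / (2 * (D₁ + D₂)) := by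
          gcongr
      _ = Δ ^ 2 / 2 / (D₁ + D₂) + ε / 2 := by
          field_simp
  have h6 : (M : ℝ) * K * (θ ^ 2 * (K : ℝ) ^ 2 / 2 + θ * (K : ℝ) * (c₁ + c₂)) ≤ ε / 2 := by
    have hMnn : (0:ℝ) ≤ (M : ℝ) * K := by positivity
    have hθsq : θ ^ 2 ≤ θ := by
      have := mul_le_mul_of_nonneg_left hθ1 hθpos.le
      calc θ ^ 2 = θ * θ := sq θ
        _ ≤ θ * 1 := this
        _ = θ := mul_one θ
    have hh : θ ^ 2 * ((K:ℝ) ^ 2 / 2) ≤ θ * ((K:ℝ) ^ 2 / 2) :=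
      mul_le_mul_of_nonneg_right hθsq (by positivity)
    have step : θ ^ 2 * (K : ℝ) ^ 2 / 2 + θ * (K : ℝ) * (c₁ + c₂) ≤
        θ * ((K : ℝ) ^ 2 / 2 + (K : ℝ) * (c₁ + c₂)) := by linarith only [hh]
    calc (M : ℝ) * K * (θ ^ 2 * (K : ℝ) ^ 2 / 2 + θ * (K : ℝ) * (c₁ + c₂))
        ≤ (M : ℝ) * K * (θ * ((K : ℝ) ^ 2 / 2 + (K : ℝ) * (c₁ + c₂))) :=
          mul_le_mul_of_nonneg_left step hMnn
      _ = θ * C := by rw [hCdef]; ring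
      _ ≤ ε / 2 := by linarith only [hθε, hθpos.le, mul_nonneg hθpos.le hC]
  calc ∑ m : Fin M, ∑ i ∈ S m, ω m i * (v m i - v' m i) ^ 2 / 2
      ≤ ∑ m : Fin M, ∑ j ∈ S m,
        (ω m j * (if j = i₁ ∧ i₁ ∈ S m then -(c₁ / ω m i₁) else 0) ^ 2 / 2 +
         ω m j * (if j = i₂ ∧ i₂ ∈ S m then c₂ / ω m i₂ else 0) ^ 2 / 2 +
         (θ ^ 2 * (K : ℝ) ^ 2 / 2 + θ * (K : ℝ) * (c₁ + c₂))) :=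
        Finset.sum_le_sum (fun m _ => Finset.sum_le_sum (fun j hj => keybound m j hj))
      _ = δ₁ ^ 2 / (2 * D₁) + δ₂ ^ 2 / (2 * D₂) +
          ∑ m : Fin M, ∑ _j ∈ S m, (θ ^ 2 * (K : ℝ) ^ 2 / 2 + θ * (K : ℝ) * (c₁ + c₂)) := by
        simp only [Finset.sum_add_distrib]
        rw [hTa, hTb]
      _ ≤ (Δ + η) ^ 2 / (2 * (D₁ + D₂)) +
          (M : ℝ) * K * (θ ^ 2 * (K : ℝ) ^ 2 / 2 + θ * (K : ℝ) * (c₁ + c₂)) := by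
        rw [← hTc]
        exact add_le_add_right hconstsum _
      _ ≤ Δ ^ 2 / 2 / (D₁ + D₂) + ε / 2 + ε / 2 := add_le_add h5 h6
      _ = Δ ^ 2 / 2 / (D₁ + D₂) + ε := by ring

end Helpers

/-- Equation (26): closed form of `g_v(ω)` as a minimum over the pairs in `C(v)`. -/
theorem stmt1 (K M : ℕ) (hK : 2 ≤ K) (hM : 1 ≤ M) (S : Fin M → Finset (Fin K))
    (hS : ∀ m, 2 ≤ (S m).card) (hcov : ∀ i : Fin K, ∃ m, i ∈ S m)
    (v : Fin M → Fin K → ℝ) (hv : v ∈ PSet S)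
    (ω : Fin M → Fin K → ℝ) (hω : ω ∈ Gam S)
    (hpos : ∀ m : Fin M, ∀ i ∈ S m, 0 < ω m i) :
    gfun S v ω =
      sInf {x | ∃ m : Fin M, ∃ i₁ i₂ : Fin K, isBest S v m i₁ ∧ i₂ ∈ S m ∧ i₂ ≠ i₁ ∧
        x = (armMean S v i₁ - armMean S v i₂) ^ 2 / 2 /
          (armDenom S ω i₁ + armDenom S ω i₂)} := by
  classical
  rw [gfun]
  have hRHSbdd : BddBelow {x | ∃ m : Fin M, ∃ i₁ i₂ : Fin K,
      isBest S v m i₁ ∧ i₂ ∈ S m ∧ i₂ ≠ i₁ ∧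
      x = (armMean S v i₁ - armMean S v i₂) ^ 2 / 2 /
        (armDenom S ω i₁ + armDenom S ω i₂)} := by
    refine ⟨0, fun x hx => ?_⟩
    obtain ⟨m, i₁, i₂, hb, h2, h3, rfl⟩ := hx
    have hd1 := denom_pos S ω hcov hpos i₁
    have hd2 := denom_pos S ω hcov hpos i₂
    positivity
  have hLHSbdd : BddBelow {x | ∃ v' ∈ AltSet S v,
      x = ∑ m : Fin M, ∑ i ∈ S m, ω m i * (v m i - v' m i) ^ 2 / 2} := by
    refine ⟨0, fun y hy => ?_⟩
    obtain ⟨v', _, rfl⟩ := hy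
    refine Finset.sum_nonneg (fun m _ => Finset.sum_nonneg (fun i hi => ?_))
    have := hω.1 m i hi
    positivity
  have hRHSne : {x | ∃ m : Fin M, ∃ i₁ i₂ : Fin K,
      isBest S v m i₁ ∧ i₂ ∈ S m ∧ i₂ ≠ i₁ ∧
      x = (armMean S v i₁ - armMean S v i₂) ^ 2 / 2 /
        (armDenom S ω i₁ + armDenom S ω i₂)}.Nonempty := by
    have hM0 : 0 < M := hM
    obtain ⟨b, hb⟩ := hv ⟨0, hM0⟩
    obtain ⟨c, hc, hcb⟩ := Finset.exists_mem_ne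
      (lt_of_lt_of_le one_lt_two (hS ⟨0, hM0⟩)) b
    exact ⟨_, ⟨0, hM0⟩, b, c, hb, hc, hcb, rfl⟩
  have hUB : ∀ x ∈ {x | ∃ m : Fin M, ∃ i₁ i₂ : Fin K,
      isBest S v m i₁ ∧ i₂ ∈ S m ∧ i₂ ≠ i₁ ∧
      x = (armMean S v i₁ - armMean S v i₂) ^ 2 / 2 /
        (armDenom S ω i₁ + armDenom S ω i₂)},
      ∀ ε : ℝ, 0 < ε → ∃ y ∈ {x | ∃ v' ∈ AltSet S v,
        x = ∑ m : Fin M, ∑ i ∈ S m, ω m i * (v m i - v' m i) ^ 2 / 2}, y ≤ x + ε := by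
    intro x hx ε hε
    obtain ⟨m, i₁, i₂, hb, h2, h3, rfl⟩ := hx
    obtain ⟨v', hA, hc⟩ := construct S v ω hK hcov hv hω hpos hb h2 h3 hε
    exact ⟨_, ⟨v', hA, rfl⟩, hc⟩
  have hLHSne : {x | ∃ v' ∈ AltSet S v,
      x = ∑ m : Fin M, ∑ i ∈ S m, ω m i * (v m i - v' m i) ^ 2 / 2}.Nonempty := by
    obtain ⟨x, hx⟩ := hRHSne
    obtain ⟨y, hy, -⟩ := hUB x hx 1 one_pos
    exact ⟨y, hy⟩
  refine le_antisymm (le_csInf hRHSne ?_) (le_csInf hLHSne ?_)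
  · intro x hx
    refine le_of_forall_pos_le_add (fun ε hε => ?_)
    obtain ⟨y, hy, hyx⟩ := hUB x hx ε hε
    exact (csInf_le hLHSbdd hy).trans hyx
  · intro y hy
    obtain ⟨v', hv', rfl⟩ := hy
    obtain ⟨m, i₁, i₂, hb, h2, h3, hle⟩ := lower_bound S v ω hcov hv hpos hv'
    exact (csInf_le hRHSbdd ⟨m, i₁, i₂, hb, h2, h3, rfl⟩).trans hle

end

end HetTS
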